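/- arXiv:2101.04831 — 8 statements merged into one kernel-verified Lean document; each statement's English description precedes it below -/
import Mathlib

section
/- Let (g, [·,·]) be a Leibniz algebra over a field K of characteristic zero, (V, ρ^L, ρ^R) a representation of g, and R, S : V → g linear maps. Equip g ⊕ g ⊕ V with the Leibniz bracket [(x₁, x₂, u), (y₁, y₂, v)] = ([x₁,y₁], [x₂,y₂], ρ^L(x₁)v + ρ^R(y₂)u), and define linear maps R̃, S̃ : g ⊕ g ⊕ V → g ⊕ g ⊕ V by R̃(x₁, x₂, u) = (R(u), 0, 0) and S̃(x₁, x₂, u) = (0, S(u), 0). Then (R, S) is a relative Rota-Baxter system on g with respect to (V, ρ^L, ρ^R) if and only if (R̃, S̃) is a Rota-Baxter system on the Leibniz algebra g ⊕ g ⊕ V, i.e. [R̃a, R̃b] = R̃([R̃a, b] + [a, S̃b]) and [S̃a, S̃b] = S̃([R̃a, b] + [a, S̃b]) for all a, b ∈ g ⊕ g ⊕ V. -/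
/-! Both `R̃` and `S̃` land in a single coordinate, so each side of the lifted identities at
`p, q` is supported in one coordinate, and the `V`-component of `[R̃p, q] + [p, S̃q]` is
`ρL(R u) v + ρR(S v) u` for the `V`-components `u, v` of `p, q`. Hence the lifted identities at
`p, q` are exactly the relative ones at `u, v`. -/

section LiftedRotaBaxter

variable {K g V : Type*} [CommSemiring K] [AddCommMonoid g] [Module K g]
  [AddCommMonoid V] [Module K V]
  {b : g →ₗ[K] g →ₗ[K] g} {ρL ρR : g →ₗ[K] Module.End K V} {R S : V →ₗ[K] g}
  {Br : g × g × V → g × g × V → g × g × V} {Rt St : g × g × V → g × g × V}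

theorem lifted_bracket_Rt_Rt
    (hBr : ∀ (x₁ x₂ : g) (u : V) (y₁ y₂ : g) (v : V),
      Br (x₁, x₂, u) (y₁, y₂, v) = (b x₁ y₁, b x₂ y₂, ρL x₁ v + ρR y₂ u))
    (hRt : ∀ (x₁ x₂ : g) (u : V), Rt (x₁, x₂, u) = (R u, 0, 0)) (p q : g × g × V) :
    Br (Rt p) (Rt q) = (b (R p.2.2) (R q.2.2), 0, 0) := by
  simp [hRt p.1 p.2.1 p.2.2, hRt q.1 q.2.1 q.2.2, hBr]

theorem lifted_bracket_St_St
    (hBr : ∀ (x₁ x₂ : g) (u : V) (y₁ y₂ : g) (v : V),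
      Br (x₁, x₂, u) (y₁, y₂, v) = (b x₁ y₁, b x₂ y₂, ρL x₁ v + ρR y₂ u))
    (hSt : ∀ (x₁ x₂ : g) (u : V), St (x₁, x₂, u) = (0, S u, 0)) (p q : g × g × V) :
    Br (St p) (St q) = (0, b (S p.2.2) (S q.2.2), 0) := by
  simp [hSt p.1 p.2.1 p.2.2, hSt q.1 q.2.1 q.2.2, hBr]

theorem snd_snd_lifted_bracket_Rt_add_bracket_St
    (hBr : ∀ (x₁ x₂ : g) (u : V) (y₁ y₂ : g) (v : V),
      Br (x₁, x₂, u) (y₁, y₂, v) = (b x₁ y₁, b x₂ y₂, ρL x₁ v + ρR y₂ u))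
    (hRt : ∀ (x₁ x₂ : g) (u : V), Rt (x₁, x₂, u) = (R u, 0, 0))
    (hSt : ∀ (x₁ x₂ : g) (u : V), St (x₁, x₂, u) = (0, S u, 0)) (p q : g × g × V) :
    (Br (Rt p) q + Br p (St q)).2.2 = ρL (R p.2.2) q.2.2 + ρR (S q.2.2) p.2.2 := by
  simp [hRt p.1 p.2.1 p.2.2, hSt q.1 q.2.1 q.2.2, hBr]

theorem lifted_rotaBaxter_iff
    (hBr : ∀ (x₁ x₂ : g) (u : V) (y₁ y₂ : g) (v : V),
      Br (x₁, x₂, u) (y₁, y₂, v) = (b x₁ y₁, b x₂ y₂, ρL x₁ v + ρR y₂ u))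
    (hRt : ∀ (x₁ x₂ : g) (u : V), Rt (x₁, x₂, u) = (R u, 0, 0))
    (hSt : ∀ (x₁ x₂ : g) (u : V), St (x₁, x₂, u) = (0, S u, 0)) (p q : g × g × V) :
    (Br (Rt p) (Rt q) = Rt (Br (Rt p) q + Br p (St q)) ∧
        Br (St p) (St q) = St (Br (Rt p) q + Br p (St q))) ↔
      (b (R p.2.2) (R q.2.2) = R (ρL (R p.2.2) q.2.2 + ρR (S q.2.2) p.2.2) ∧
        b (S p.2.2) (S q.2.2) = S (ρL (R p.2.2) q.2.2 + ρR (S q.2.2) p.2.2)) := by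
  set z := Br (Rt p) q + Br p (St q) with hz
  rw [lifted_bracket_Rt_Rt hBr hRt, lifted_bracket_St_St hBr hSt, hRt z.1 z.2.1 z.2.2,
    hSt z.1 z.2.1 z.2.2, hz, snd_snd_lifted_bracket_Rt_add_bracket_St hBr hRt hSt]
  simp

end LiftedRotaBaxter

theorem stmt3_general (K : Type*) [Field K]
    (g : Type*) [AddCommGroup g] [Module K g]
    (V : Type*) [AddCommGroup V] [Module K V]
    (b : g →ₗ[K] g →ₗ[K] g)
    (ρL ρR : g →ₗ[K] Module.End K V)
    (R S : V →ₗ[K] g)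
    (Br : g × g × V → g × g × V → g × g × V)
    (hBr : ∀ (x₁ x₂ : g) (u : V) (y₁ y₂ : g) (v : V),
      Br (x₁, x₂, u) (y₁, y₂, v) = (b x₁ y₁, b x₂ y₂, ρL x₁ v + ρR y₂ u))
    (Rt St : g × g × V → g × g × V)
    (hRt : ∀ (x₁ x₂ : g) (u : V), Rt (x₁, x₂, u) = (R u, 0, 0))
    (hSt : ∀ (x₁ x₂ : g) (u : V), St (x₁, x₂, u) = (0, S u, 0)) :
    ((∀ u v : V,
        b (R u) (R v) = R (ρL (R u) v + ρR (S v) u) ∧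
        b (S u) (S v) = S (ρL (R u) v + ρR (S v) u))
      ↔ (∀ p q : g × g × V,
        Br (Rt p) (Rt q) = Rt (Br (Rt p) q + Br p (St q)) ∧
        Br (St p) (St q) = St (Br (Rt p) q + Br p (St q)))) := by
  simp only [lifted_rotaBaxter_iff hBr hRt hSt]
  exact ⟨fun h p q => h p.2.2 q.2.2, fun h u v => h (0, 0, u) (0, 0, v)⟩

/-- `(R, S)` is a relative Rota-Baxter system on `g` with respect to `(V, ρL, ρR)` iff
the lifted pair `(R̃, S̃)` is a Rota-Baxter system on the Leibniz algebra `g ⊕ g ⊕ V`. -/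
theorem stmt3 (K : Type*) [Field K] [CharZero K]
    (g : Type*) [AddCommGroup g] [Module K g]
    (V : Type*) [AddCommGroup V] [Module K V]
    (b : g →ₗ[K] g →ₗ[K] g)
    (hleib : ∀ x y z : g, b x (b y z) = b (b x y) z + b y (b x z))
    (ρL ρR : g →ₗ[K] Module.End K V)
    (hrep1 : ∀ x y : g, ρL (b x y) = ρL x * ρL y - ρL y * ρL x)
    (hrep2 : ∀ x y : g, ρR (b x y) = ρL x * ρR y - ρR y * ρL x)
    (hrep3 : ∀ x y : g, ρR y * ρL x = -(ρR y * ρR x))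
    (R S : V →ₗ[K] g)
    (Br : g × g × V → g × g × V → g × g × V)
    (hBr : ∀ (x₁ x₂ : g) (u : V) (y₁ y₂ : g) (v : V),
      Br (x₁, x₂, u) (y₁, y₂, v) = (b x₁ y₁, b x₂ y₂, ρL x₁ v + ρR y₂ u))
    (Rt St : g × g × V → g × g × V)
    (hRt : ∀ (x₁ x₂ : g) (u : V), Rt (x₁, x₂, u) = (R u, 0, 0))
    (hSt : ∀ (x₁ x₂ : g) (u : V), St (x₁, x₂, u) = (0, S u, 0)) :
    ((∀ u v : V,
        b (R u) (R v) = R (ρL (R u) v + ρR (S v) u) ∧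
        b (S u) (S v) = S (ρL (R u) v + ρR (S v) u))
      ↔ (∀ p q : g × g × V,
        Br (Rt p) (Rt q) = Rt (Br (Rt p) q + Br p (St q)) ∧
        Br (St p) (St q) = St (Br (Rt p) q + Br p (St q)))) :=
  stmt3_general K g V b ρL ρR R S Br hBr Rt St hRt hSt
end

section
/- Let (g, [·,·]) be a Leibniz algebra over a field K of characteristic zero, (V, ρ^L, ρ^R) a representation of g, and R, S : V → g linear maps. Equip g ⊕ g ⊕ V with the Leibniz bracket [(x₁, x₂, u), (y₁, y₂, v)] = ([x₁,y₁], [x₂,y₂], ρ^L(x₁)v + ρ^R(y₂)u), and define the linear map N : g ⊕ g ⊕ V → g ⊕ g ⊕ V by N(x₁, x₂, u) = (R(u), S(u), 0). Then (R, S) is a relative Rota-Baxter system on g with respect to (V, ρ^L, ρ^R) if and only if N is a Nijenhuis operator on the Leibniz algebra g ⊕ g ⊕ V. -/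
/-!
Write `p = (x₁, x₂, u)` and `q = (y₁, y₂, v)`. Since `N` only sees the `V`-component and lands in
`g ⊕ g ⊕ 0`, we get `[Np, Nq] = ([Ru, Rv], [Su, Sv], 0)`, while the `V`-component of
`[Np, q] + [p, Nq] - N[p, q]` is `ρᴸ(Ru)v + ρᴿ(Sv)u`. Hence the Nijenhuis identity at `(p, q)` is
exactly the pair of Rota-Baxter system identities at `(u, v)`.
-/

section NijenhuisRotaBaxter

variable {K g V : Type*} [CommSemiring K] [AddCommGroup g] [Module K g] [AddCommGroup V] [Module K V]
  {b : g →ₗ[K] g →ₗ[K] g} {ρL ρR : g →ₗ[K] Module.End K V} {R S : V →ₗ[K] g}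
  {Br : g × g × V → g × g × V → g × g × V} {N : g × g × V → g × g × V}

theorem bracket_nijenhuis_nijenhuis
    (hBr : ∀ (x₁ x₂ : g) (u : V) (y₁ y₂ : g) (v : V),
      Br (x₁, x₂, u) (y₁, y₂, v) = (b x₁ y₁, b x₂ y₂, ρL x₁ v + ρR y₂ u))
    (hN : ∀ (x₁ x₂ : g) (u : V), N (x₁, x₂, u) = (R u, S u, 0)) (p q : g × g × V) :
    Br (N p) (N q) = (b (R p.2.2) (R q.2.2), b (S p.2.2) (S q.2.2), 0) := by
  obtain ⟨x₁, x₂, u⟩ := p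
  obtain ⟨y₁, y₂, v⟩ := q
  simp [hN, hBr]

theorem nijenhuis_deformedBracket
    (hBr : ∀ (x₁ x₂ : g) (u : V) (y₁ y₂ : g) (v : V),
      Br (x₁, x₂, u) (y₁, y₂, v) = (b x₁ y₁, b x₂ y₂, ρL x₁ v + ρR y₂ u))
    (hN : ∀ (x₁ x₂ : g) (u : V), N (x₁, x₂, u) = (R u, S u, 0)) (p q : g × g × V) :
    N (Br (N p) q + Br p (N q) - N (Br p q)) =
      (R (ρL (R p.2.2) q.2.2 + ρR (S q.2.2) p.2.2),
        S (ρL (R p.2.2) q.2.2 + ρR (S q.2.2) p.2.2), 0) := by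
  obtain ⟨x₁, x₂, u⟩ := p
  obtain ⟨y₁, y₂, v⟩ := q
  simp [hN, hBr]

theorem nijenhuis_identity_iff_rotaBaxter_identities
    (hBr : ∀ (x₁ x₂ : g) (u : V) (y₁ y₂ : g) (v : V),
      Br (x₁, x₂, u) (y₁, y₂, v) = (b x₁ y₁, b x₂ y₂, ρL x₁ v + ρR y₂ u))
    (hN : ∀ (x₁ x₂ : g) (u : V), N (x₁, x₂, u) = (R u, S u, 0)) (p q : g × g × V) :
    Br (N p) (N q) = N (Br (N p) q + Br p (N q) - N (Br p q)) ↔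
      b (R p.2.2) (R q.2.2) = R (ρL (R p.2.2) q.2.2 + ρR (S q.2.2) p.2.2) ∧
        b (S p.2.2) (S q.2.2) = S (ρL (R p.2.2) q.2.2 + ρR (S q.2.2) p.2.2) := by
  rw [bracket_nijenhuis_nijenhuis hBr hN, nijenhuis_deformedBracket hBr hN]
  simp only [Prod.mk.injEq, and_true]

end NijenhuisRotaBaxter

theorem stmt4_general (K : Type*) [Field K]
    (g : Type*) [AddCommGroup g] [Module K g]
    (V : Type*) [AddCommGroup V] [Module K V]
    (b : g →ₗ[K] g →ₗ[K] g)
    (ρL ρR : g →ₗ[K] Module.End K V)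
    (R S : V →ₗ[K] g)
    (Br : g × g × V → g × g × V → g × g × V)
    (hBr : ∀ (x₁ x₂ : g) (u : V) (y₁ y₂ : g) (v : V),
      Br (x₁, x₂, u) (y₁, y₂, v) = (b x₁ y₁, b x₂ y₂, ρL x₁ v + ρR y₂ u))
    (N : g × g × V → g × g × V)
    (hN : ∀ (x₁ x₂ : g) (u : V), N (x₁, x₂, u) = (R u, S u, 0)) :
    ((∀ u v : V,
        b (R u) (R v) = R (ρL (R u) v + ρR (S v) u) ∧
        b (S u) (S v) = S (ρL (R u) v + ρR (S v) u))
      ↔ (∀ p q : g × g × V,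
        Br (N p) (N q) = N (Br (N p) q + Br p (N q) - N (Br p q)))) := by
  constructor
  · intro hRB p q
    exact (nijenhuis_identity_iff_rotaBaxter_identities hBr hN p q).2 (hRB _ _)
  · intro hNij u v
    exact (nijenhuis_identity_iff_rotaBaxter_identities hBr hN (0, 0, u) (0, 0, v)).1 (hNij _ _)

/-- `(R, S)` is a relative Rota-Baxter system on `g` with respect to `(V, ρL, ρR)` iff
`N(x₁,x₂,u) = (Ru, Su, 0)` is a Nijenhuis operator on the Leibniz algebra `g ⊕ g ⊕ V`. -/
theorem stmt4 (K : Type*) [Field K] [CharZero K]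
    (g : Type*) [AddCommGroup g] [Module K g]
    (V : Type*) [AddCommGroup V] [Module K V]
    (b : g →ₗ[K] g →ₗ[K] g)
    (hleib : ∀ x y z : g, b x (b y z) = b (b x y) z + b y (b x z))
    (ρL ρR : g →ₗ[K] Module.End K V)
    (hrep1 : ∀ x y : g, ρL (b x y) = ρL x * ρL y - ρL y * ρL x)
    (hrep2 : ∀ x y : g, ρR (b x y) = ρL x * ρR y - ρR y * ρL x)
    (hrep3 : ∀ x y : g, ρR y * ρL x = -(ρR y * ρR x))
    (R S : V →ₗ[K] g)
    (Br : g × g × V → g × g × V → g × g × V)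
    (hBr : ∀ (x₁ x₂ : g) (u : V) (y₁ y₂ : g) (v : V),
      Br (x₁, x₂, u) (y₁, y₂, v) = (b x₁ y₁, b x₂ y₂, ρL x₁ v + ρR y₂ u))
    (N : g × g × V → g × g × V)
    (hN : ∀ (x₁ x₂ : g) (u : V), N (x₁, x₂, u) = (R u, S u, 0)) :
    ((∀ u v : V,
        b (R u) (R v) = R (ρL (R u) v + ρR (S v) u) ∧
        b (S u) (S v) = S (ρL (R u) v + ρR (S v) u))
      ↔ (∀ p q : g × g × V,
        Br (N p) (N q) = N (Br (N p) q + Br p (N q) - N (Br p q)))) :=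
  stmt4_general K g V b ρL ρR R S Br hBr N hN
end

section
/- Let (g, [·,·]) be a Leibniz algebra over a field K of characteristic zero, (V, ρ^L, ρ^R) a representation of g, and let R, S : V → g be invertible (bijective) linear maps. Then (R, S) is a relative Rota-Baxter system on g with respect to (V, ρ^L, ρ^R) if and only if the pair (R⁻¹, S⁻¹) is an invertible 1-cocycle system, i.e. for all x, y ∈ g: R⁻¹([x,y]) = ρ^L(x)(R⁻¹ y) + ρ^R(S(R⁻¹ y))(R⁻¹ x) and S⁻¹([x,y]) = ρ^L(R(S⁻¹ x))(S⁻¹ y) + ρ^R(y)(S⁻¹ x). -/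
theorem Function.LeftInverse.forall₂_apply_eq_iff {α β : Type*} {e : α → β} {e' : β → α}
    (h₁ : Function.LeftInverse e' e) (h₂ : Function.RightInverse e' e)
    (f : β → β → β) (F : α → α → α) :
    (∀ u v, f (e u) (e v) = e (F u v)) ↔ ∀ x y, e' (f x y) = F (e' x) (e' y) := by
  constructor
  · intro h x y
    have hxy := h (e' x) (e' y)
    rw [h₂ x, h₂ y] at hxy
    rw [hxy, h₁]
  · intro h u v
    have huv := h (e u) (e v)
    rw [h₁ u, h₁ v] at huv
    rw [← huv, h₂]

theorem stmt5_general (K : Type*) [Field K]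
    (g : Type*) [AddCommGroup g] [Module K g]
    (V : Type*) [AddCommGroup V] [Module K V]
    (b : g →ₗ[K] g →ₗ[K] g)
    (ρL ρR : g →ₗ[K] Module.End K V)
    (R S : V →ₗ[K] g)
    (Rinv Sinv : g → V)
    (hRinv₁ : Function.LeftInverse Rinv R) (hRinv₂ : Function.RightInverse Rinv R)
    (hSinv₁ : Function.LeftInverse Sinv S) (hSinv₂ : Function.RightInverse Sinv S) :
    ((∀ u v : V,
        b (R u) (R v) = R (ρL (R u) v + ρR (S v) u) ∧
        b (S u) (S v) = S (ρL (R u) v + ρR (S v) u))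
      ↔ (∀ x y : g,
        Rinv (b x y) = ρL x (Rinv y) + ρR (S (Rinv y)) (Rinv x) ∧
        Sinv (b x y) = ρL (R (Sinv x)) (Sinv y) + ρR y (Sinv x))) := by
  let F : V → V → V := fun u v => ρL (R u) v + ρR (S v) u
  simp only [forall_and]
  refine and_congr ?_ ?_
  · simpa only [F, hRinv₂ _] using hRinv₁.forall₂_apply_eq_iff hRinv₂ (fun x y => b x y) F
  · simpa only [F, hSinv₂ _] using hSinv₁.forall₂_apply_eq_iff hSinv₂ (fun x y => b x y) F

/-- A pair `(R, S)` of invertible linear maps `V → g` is a relative Rota-Baxter system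
iff `(R⁻¹, S⁻¹)` is an invertible 1-cocycle system. -/
theorem stmt5 (K : Type*) [Field K] [CharZero K]
    (g : Type*) [AddCommGroup g] [Module K g]
    (V : Type*) [AddCommGroup V] [Module K V]
    (b : g →ₗ[K] g →ₗ[K] g)
    (hleib : ∀ x y z : g, b x (b y z) = b (b x y) z + b y (b x z))
    (ρL ρR : g →ₗ[K] Module.End K V)
    (hrep1 : ∀ x y : g, ρL (b x y) = ρL x * ρL y - ρL y * ρL x)
    (hrep2 : ∀ x y : g, ρR (b x y) = ρL x * ρR y - ρR y * ρL x)
    (hrep3 : ∀ x y : g, ρR y * ρL x = -(ρR y * ρR x))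
    (R S : V →ₗ[K] g)
    (Rinv Sinv : g → V)
    (hRinv₁ : Function.LeftInverse Rinv R) (hRinv₂ : Function.RightInverse Rinv R)
    (hSinv₁ : Function.LeftInverse Sinv S) (hSinv₂ : Function.RightInverse Sinv S) :
    ((∀ u v : V,
        b (R u) (R v) = R (ρL (R u) v + ρR (S v) u) ∧
        b (S u) (S v) = S (ρL (R u) v + ρR (S v) u))
      ↔ (∀ x y : g,
        Rinv (b x y) = ρL x (Rinv y) + ρR (S (Rinv y)) (Rinv x) ∧
        Sinv (b x y) = ρL (R (Sinv x)) (Sinv y) + ρR y (Sinv x))) :=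
  stmt5_general K g V b ρL ρR R S Rinv Sinv hRinv₁ hRinv₂ hSinv₁ hSinv₂
end

section
/- Let (g, [·,·]) be a nondegenerate Leibniz algebra over a field K of characteristic zero, i.e. if [x, y] = 0 for all y ∈ g then x = 0, and if [x, y] = 0 for all x ∈ g then y = 0. Suppose R : g → g is a left g-linear map (R([x,y]) = [x, Ry] for all x, y) and S : g → g is a right g-linear map (S([x,y]) = [Sx, y] for all x, y). Then (R, S) is a Rota-Baxter system on (g, [·,·]) if and only if R∘S = 0 and S∘R = 0. -/
section RotaBaxterSystem

variable {K g : Type*} [CommRing K] [AddCommGroup g] [Module K g] (b : g →ₗ[K] g →ₗ[K] g)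

theorem rotaBaxterSystem_fst_iff {R S : g →ₗ[K] g} (hR : ∀ x y : g, R (b x y) = b x (R y))
    (x y : g) : b (R x) (R y) = R (b (R x) y + b x (S y)) ↔ b x (R (S y)) = 0 := by
  rw [map_add, hR, hR, eq_comm, add_eq_left]

theorem rotaBaxterSystem_snd_iff {R S : g →ₗ[K] g} (hS : ∀ x y : g, S (b x y) = b (S x) y)
    (x y : g) : b (S x) (S y) = S (b (R x) y + b x (S y)) ↔ b (S (R x)) y = 0 := by
  rw [map_add, hS, hS, eq_comm, add_eq_right]

variable {b}

theorem eq_zero_iff_forall_bracket_left_eq_zero (hnd : ∀ y : g, (∀ x : g, b x y = 0) → y = 0)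
    (f : g →ₗ[K] g) : f = 0 ↔ ∀ x y : g, b x (f y) = 0 :=
  ⟨fun hf x y => by simp [hf], fun h => LinearMap.ext fun y => hnd _ fun x => h x y⟩

theorem eq_zero_iff_forall_bracket_right_eq_zero (hnd : ∀ x : g, (∀ y : g, b x y = 0) → x = 0)
    (f : g →ₗ[K] g) : f = 0 ↔ ∀ x y : g, b (f x) y = 0 :=
  ⟨fun hf x y => by simp [hf], fun h => LinearMap.ext fun x => hnd _ (h x)⟩

end RotaBaxterSystem

theorem stmt9_general (K : Type*) [Field K]
    (g : Type*) [AddCommGroup g] [Module K g]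
    (b : g →ₗ[K] g →ₗ[K] g)
    (hnd₁ : ∀ x : g, (∀ y : g, b x y = 0) → x = 0)
    (hnd₂ : ∀ y : g, (∀ x : g, b x y = 0) → y = 0)
    (R S : g →ₗ[K] g)
    (hR : ∀ x y : g, R (b x y) = b x (R y))
    (hS : ∀ x y : g, S (b x y) = b (S x) y) :
    ((∀ x y : g,
        b (R x) (R y) = R (b (R x) y + b x (S y)) ∧
        b (S x) (S y) = S (b (R x) y + b x (S y)))
      ↔ (R ∘ₗ S = 0 ∧ S ∘ₗ R = 0)) := by
  simp only [rotaBaxterSystem_fst_iff b hR, rotaBaxterSystem_snd_iff b hS, forall_and,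
    eq_zero_iff_forall_bracket_left_eq_zero hnd₂ (R ∘ₗ S),
    eq_zero_iff_forall_bracket_right_eq_zero hnd₁ (S ∘ₗ R), LinearMap.comp_apply]

/-- On a nondegenerate Leibniz algebra, if `R` is left `g`-linear and `S` is right
`g`-linear, then `(R, S)` is a Rota-Baxter system iff `R ∘ S = 0` and `S ∘ R = 0`. -/
theorem stmt9 (K : Type*) [Field K] [CharZero K]
    (g : Type*) [AddCommGroup g] [Module K g]
    (b : g →ₗ[K] g →ₗ[K] g)
    (hleib : ∀ x y z : g, b x (b y z) = b (b x y) z + b y (b x z))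
    (hnd₁ : ∀ x : g, (∀ y : g, b x y = 0) → x = 0)
    (hnd₂ : ∀ y : g, (∀ x : g, b x y = 0) → y = 0)
    (R S : g →ₗ[K] g)
    (hR : ∀ x y : g, R (b x y) = b x (R y))
    (hS : ∀ x y : g, S (b x y) = b (S x) y) :
    ((∀ x y : g,
        b (R x) (R y) = R (b (R x) y + b x (S y)) ∧
        b (S x) (S y) = S (b (R x) y + b x (S y)))
      ↔ (R ∘ₗ S = 0 ∧ S ∘ₗ R = 0)) :=
  stmt9_general K g b hnd₁ hnd₂ R S hR hS
end

section
/- Let (g, [·,·], R, ∂) be a differential Rota-Baxter Leibniz algebra of weight λ over a field K of characteristic zero, i.e. (g, [·,·]) is a Leibniz algebra and R, ∂ : g → g are linear maps satisfying (dR1) [Rx, Ry] = R([Rx, y] + [x, Ry] + λ[x, y]), (dR2) ∂([x,y]) = [∂x, y] + [x, ∂y] + λ[∂x, ∂y], and (dR3) ∂∘R = Id. Then the map σ : g → g defined by σ(x) = x + λ∂(x) is a Leibniz algebra morphism, σ∘R = R + λ·Id, and R is a σ-twisted Rota-Baxter operator, i.e. [Rx, Ry] = R([Rx, y] + [x, σ(Ry)])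 for all x, y ∈ g. -/
/-!
With `σ = id + λ∂`, expanding `[σx, σy]` reproduces exactly the weighted Leibniz rule (dR2),
so `σ` is multiplicative; (dR3) gives `σ ∘ R = R + λ·Id`, which turns the term
`[x, Ry] + λ[x, y]` of (dR1) into `[x, σ(Ry)]`.
-/

section WeightedDifferential

variable {K g : Type*} [CommSemiring K] [AddCommMonoid g] [Module K g]
  (b : g →ₗ[K] g →ₗ[K] g) (lam : K)

theorem bracket_add_smul_eq_of_weighted_derivation (D : g →ₗ[K] g)
    (hD : ∀ x y : g, D (b x y) = b (D x) y + b x (D y) + lam • b (D x) (D y)) (x y : g) :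
    b x y + lam • D (b x y) = b (x + lam • D x) (y + lam • D y) := by
  simp only [hD, map_add, map_smul, LinearMap.add_apply, LinearMap.smul_apply, smul_add,
    smul_smul]
  abel

theorem twisted_rotaBaxter_of_weighted_rotaBaxter {R : g →ₗ[K] g} {σ : g → g}
    (hR : ∀ x y : g, b (R x) (R y) = R (b (R x) y + b x (R y) + lam • b x y))
    (hσR : ∀ x : g, σ (R x) = R x + lam • x) (x y : g) :
    b (R x) (R y) = R (b (R x) y + b x (σ (R y))) := by
  rw [hR, hσR, map_add (b x), map_smul, add_assoc]

end WeightedDifferential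

theorem stmt11_general (K : Type*) [Field K]
    (g : Type*) [AddCommGroup g] [Module K g]
    (b : g →ₗ[K] g →ₗ[K] g)
    (lam : K) (R D : g →ₗ[K] g)
    (hdR1 : ∀ x y : g, b (R x) (R y) = R (b (R x) y + b x (R y) + lam • b x y))
    (hdR2 : ∀ x y : g, D (b x y) = b (D x) y + b x (D y) + lam • b (D x) (D y))
    (hdR3 : ∀ x : g, D (R x) = x)
    (σ : g → g)
    (hσ : ∀ x : g, σ x = x + lam • D x) :
    (∀ x y : g, σ (b x y) = b (σ x) (σ y)) ∧
    (∀ x : g, σ (R x) = R x + lam • x) ∧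
    (∀ x y : g, b (R x) (R y) = R (b (R x) y + b x (σ (R y)))) := by
  have hσR : ∀ x : g, σ (R x) = R x + lam • x := fun x => by rw [hσ, hdR3]
  refine ⟨fun x y => ?_, hσR, twisted_rotaBaxter_of_weighted_rotaBaxter b lam hdR1 hσR⟩
  simp only [hσ]
  exact bracket_add_smul_eq_of_weighted_derivation b lam D hdR2 x y

/-- For a differential Rota-Baxter Leibniz algebra `(g, [·,·], R, ∂)` of weight `λ`,
the map `σ(x) = x + λ∂(x)` is a Leibniz algebra morphism, `σ ∘ R = R + λ·Id`, and
`R` is a `σ`-twisted Rota-Baxter operator. -/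
theorem stmt11 (K : Type*) [Field K] [CharZero K]
    (g : Type*) [AddCommGroup g] [Module K g]
    (b : g →ₗ[K] g →ₗ[K] g)
    (hleib : ∀ x y z : g, b x (b y z) = b (b x y) z + b y (b x z))
    (lam : K) (R D : g →ₗ[K] g)
    (hdR1 : ∀ x y : g, b (R x) (R y) = R (b (R x) y + b x (R y) + lam • b x y))
    (hdR2 : ∀ x y : g, D (b x y) = b (D x) y + b x (D y) + lam • b (D x) (D y))
    (hdR3 : ∀ x : g, D (R x) = x)
    (σ : g → g)
    (hσ : ∀ x : g, σ x = x + lam • D x) :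
    (∀ x y : g, σ (b x y) = b (σ x) (σ y)) ∧
    (∀ x : g, σ (R x) = R x + lam • x) ∧
    (∀ x y : g, b (R x) (R y) = R (b (R x) y + b x (σ (R y)))) :=
  stmt11_general K g b lam R D hdR1 hdR2 hdR3 σ hσ
end

section
/- Let (g, [·,·]) be a Leibniz algebra over a field K of characteristic zero, with bracket regarded as the linear map μ : g ⊗ g → g, and let T : g ⊗ g → g ⊗ g be a weak pseudotwistor with weak companion τ : g ⊗ g ⊗ g → g ⊗ g ⊗ g; i.e. (η₁₂ ⊗ Id)∘τ = τ∘(η₁₂ ⊗ Id) where η₁₂ is the flip on the first two tensor factors, T∘(Id ⊗ μ)∘(Id ⊗ T) = (Id ⊗ μ)∘τ, and T∘(μ ⊗ Id)∘(T ⊗ Id) = (μ ⊗ Id)∘τ. Then the bilinear operation defined by μ∘T is a Leibniz algebra structure on g. -/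
/-!
As identities of linear maps on `g ⊗ (g ⊗ g)`, the companion identities turn each of the three
terms of the Leibniz rule for `μ ∘ T` into the corresponding term for `μ` precomposed with `τ`
(for the term containing the flip, because `τ` commutes with `η₁₂ ⊗ Id`). The Leibniz rule
for `μ ∘ T` is thus the Leibniz rule for `μ` composed with `τ`.
-/

open TensorProduct LinearMap

section Leibniz

variable {R M : Type*} [CommSemiring R] [AddCommMonoid M] [Module R M]

def IsLeibnizProduct (μ : M ⊗[R] M →ₗ[R] M) : Prop :=
  μ ∘ₗ lTensor M μ =
    μ ∘ₗ rTensor M μ ∘ₗ (TensorProduct.assoc R M M M).symm.toLinearMap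
      + μ ∘ₗ lTensor M μ ∘ₗ (leftComm R M M M).toLinearMap

theorem isLeibnizProduct_iff {μ : M ⊗[R] M →ₗ[R] M} :
    IsLeibnizProduct μ ↔ ∀ x y z : M,
      μ (x ⊗ₜ μ (y ⊗ₜ z)) = μ (μ (x ⊗ₜ y) ⊗ₜ z) + μ (y ⊗ₜ μ (x ⊗ₜ z)) := by
  constructor
  · intro h x y z
    simpa using congr($h (x ⊗ₜ (y ⊗ₜ z)))
  · intro h
    ext x y z
    simpa using h x y z

theorem TensorProduct.assoc_comp_rTensor_comm_comp_assoc_symm :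
    (TensorProduct.assoc R M M M).toLinearMap ∘ₗ rTensor M (TensorProduct.comm R M M).toLinearMap
        ∘ₗ (TensorProduct.assoc R M M M).symm.toLinearMap
      = (leftComm R M M M).toLinearMap := by
  ext x y z
  simp

/-- `T` is a weak pseudotwistor for `μ` with weak companion `τ`. -/
structure IsWeakPseudotwistor (μ : M ⊗[R] M →ₗ[R] M) (T : M ⊗[R] M →ₗ[R] M ⊗[R] M)
    (τ : M ⊗[R] (M ⊗[R] M) →ₗ[R] M ⊗[R] (M ⊗[R] M)) : Prop where
  leftComm_comp_eq : (leftComm R M M M).toLinearMap ∘ₗ τ = τ ∘ₗ (leftComm R M M M).toLinearMap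
  comp_lTensor_comp_lTensor : T ∘ₗ lTensor M μ ∘ₗ lTensor M T = lTensor M μ ∘ₗ τ
  comp_rTensor_comp_rTensor :
    T ∘ₗ rTensor M μ ∘ₗ rTensor M T ∘ₗ (TensorProduct.assoc R M M M).symm.toLinearMap =
      rTensor M μ ∘ₗ (TensorProduct.assoc R M M M).symm.toLinearMap ∘ₗ τ

theorem IsWeakPseudotwistor.isLeibnizProduct_comp {μ : M ⊗[R] M →ₗ[R] M}
    {T : M ⊗[R] M →ₗ[R] M ⊗[R] M} {τ : M ⊗[R] (M ⊗[R] M) →ₗ[R] M ⊗[R] (M ⊗[R] M)}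
    (hT : IsWeakPseudotwistor μ T τ) (hμ : IsLeibnizProduct μ) :
    IsLeibnizProduct (μ ∘ₗ T) := by
  unfold IsLeibnizProduct at hμ ⊢
  simp only [LinearMap.lTensor_comp, LinearMap.rTensor_comp, comp_assoc]
  calc μ ∘ₗ T ∘ₗ lTensor M μ ∘ₗ lTensor M T
      = (μ ∘ₗ lTensor M μ) ∘ₗ τ := by rw [hT.comp_lTensor_comp_lTensor, comp_assoc]
    _ = μ ∘ₗ rTensor M μ ∘ₗ (TensorProduct.assoc R M M M).symm.toLinearMap ∘ₗ τ
          + μ ∘ₗ lTensor M μ ∘ₗ τ ∘ₗ (leftComm R M M M).toLinearMap := by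
        rw [hμ, add_comp, ← hT.leftComm_comp_eq]
        simp only [comp_assoc]
    _ = _ := by
        have hr := congr(μ ∘ₗ $hT.comp_rTensor_comp_rTensor)
        have hl := congr(μ ∘ₗ $hT.comp_lTensor_comp_lTensor ∘ₗ (leftComm R M M M).toLinearMap)
        simp only [comp_assoc] at hr hl
        rw [← hr, ← hl]

end Leibniz

theorem stmt14_general (K : Type*) [Field K]
    (g : Type*) [AddCommGroup g] [Module K g]
    (μ : g ⊗[K] g →ₗ[K] g)
    (hleib : ∀ x y z : g,
      μ (x ⊗ₜ[K] μ (y ⊗ₜ[K] z)) = μ (μ (x ⊗ₜ[K] y) ⊗ₜ[K] z) + μ (y ⊗ₜ[K] μ (x ⊗ₜ[K] z)))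
    (T : g ⊗[K] g →ₗ[K] g ⊗[K] g)
    (τ : g ⊗[K] (g ⊗[K] g) →ₗ[K] g ⊗[K] (g ⊗[K] g))
    -- `(η₁₂ ⊗ Id) ∘ τ = τ ∘ (η₁₂ ⊗ Id)`, where `η₁₂ ⊗ Id` is expressed on
    -- `g ⊗ (g ⊗ g)` via the associator
    (hcomm :
      ((TensorProduct.assoc K g g g).toLinearMap
          ∘ₗ LinearMap.rTensor g (TensorProduct.comm K g g).toLinearMap
          ∘ₗ (TensorProduct.assoc K g g g).symm.toLinearMap) ∘ₗ τ
        = τ ∘ₗ ((TensorProduct.assoc K g g g).toLinearMap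
          ∘ₗ LinearMap.rTensor g (TensorProduct.comm K g g).toLinearMap
          ∘ₗ (TensorProduct.assoc K g g g).symm.toLinearMap))
    -- `T ∘ (Id ⊗ μ) ∘ (Id ⊗ T) = (Id ⊗ μ) ∘ τ`
    (h1 : T ∘ₗ LinearMap.lTensor g μ ∘ₗ LinearMap.lTensor g T = LinearMap.lTensor g μ ∘ₗ τ)
    -- `T ∘ (μ ⊗ Id) ∘ (T ⊗ Id) = (μ ⊗ Id) ∘ τ`, with `μ ⊗ Id` and `T ⊗ Id`
    -- expressed on `g ⊗ (g ⊗ g)` via the associator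
    (h2 : T ∘ₗ (LinearMap.rTensor g μ ∘ₗ (TensorProduct.assoc K g g g).symm.toLinearMap)
          ∘ₗ ((TensorProduct.assoc K g g g).toLinearMap
            ∘ₗ LinearMap.rTensor g T ∘ₗ (TensorProduct.assoc K g g g).symm.toLinearMap)
        = (LinearMap.rTensor g μ ∘ₗ (TensorProduct.assoc K g g g).symm.toLinearMap) ∘ₗ τ) :
    ∀ x y z : g,
      μ (T (x ⊗ₜ[K] μ (T (y ⊗ₜ[K] z)))) =
        μ (T (μ (T (x ⊗ₜ[K] y)) ⊗ₜ[K] z)) + μ (T (y ⊗ₜ[K] μ (T (x ⊗ₜ[K] z)))) := by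
  rw [TensorProduct.assoc_comp_rTensor_comm_comp_assoc_symm] at hcomm
  have hT : IsWeakPseudotwistor μ T τ := by
    refine ⟨hcomm, h1, ?_⟩
    simpa only [comp_assoc, LinearEquiv.symm_comp_assoc] using h2
  exact isLeibnizProduct_iff.mp (hT.isLeibnizProduct_comp (isLeibnizProduct_iff.mpr hleib))

/-- A weak pseudotwistor `T` on a Leibniz algebra `(g, μ)` induces a new Leibniz
algebra structure `μ ∘ T` on `g`. -/
theorem stmt14 (K : Type*) [Field K] [CharZero K]
    (g : Type*) [AddCommGroup g] [Module K g]
    (μ : g ⊗[K] g →ₗ[K] g)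
    (hleib : ∀ x y z : g,
      μ (x ⊗ₜ[K] μ (y ⊗ₜ[K] z)) = μ (μ (x ⊗ₜ[K] y) ⊗ₜ[K] z) + μ (y ⊗ₜ[K] μ (x ⊗ₜ[K] z)))
    (T : g ⊗[K] g →ₗ[K] g ⊗[K] g)
    (τ : g ⊗[K] (g ⊗[K] g) →ₗ[K] g ⊗[K] (g ⊗[K] g))
    -- `(η₁₂ ⊗ Id) ∘ τ = τ ∘ (η₁₂ ⊗ Id)`, where `η₁₂ ⊗ Id` is expressed on
    -- `g ⊗ (g ⊗ g)` via the associator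
    (hcomm :
      ((TensorProduct.assoc K g g g).toLinearMap
          ∘ₗ LinearMap.rTensor g (TensorProduct.comm K g g).toLinearMap
          ∘ₗ (TensorProduct.assoc K g g g).symm.toLinearMap) ∘ₗ τ
        = τ ∘ₗ ((TensorProduct.assoc K g g g).toLinearMap
          ∘ₗ LinearMap.rTensor g (TensorProduct.comm K g g).toLinearMap
          ∘ₗ (TensorProduct.assoc K g g g).symm.toLinearMap))
    -- `T ∘ (Id ⊗ μ) ∘ (Id ⊗ T) = (Id ⊗ μ) ∘ τ`
    (h1 : T ∘ₗ LinearMap.lTensor g μ ∘ₗ LinearMap.lTensor g T = LinearMap.lTensor g μ ∘ₗ τ)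
    -- `T ∘ (μ ⊗ Id) ∘ (T ⊗ Id) = (μ ⊗ Id) ∘ τ`, with `μ ⊗ Id` and `T ⊗ Id`
    -- expressed on `g ⊗ (g ⊗ g)` via the associator
    (h2 : T ∘ₗ (LinearMap.rTensor g μ ∘ₗ (TensorProduct.assoc K g g g).symm.toLinearMap)
          ∘ₗ ((TensorProduct.assoc K g g g).toLinearMap
            ∘ₗ LinearMap.rTensor g T ∘ₗ (TensorProduct.assoc K g g g).symm.toLinearMap)
        = (LinearMap.rTensor g μ ∘ₗ (TensorProduct.assoc K g g g).symm.toLinearMap) ∘ₗ τ) :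
    ∀ x y z : g,
      μ (T (x ⊗ₜ[K] μ (T (y ⊗ₜ[K] z)))) =
        μ (T (μ (T (x ⊗ₜ[K] y)) ⊗ₜ[K] z)) + μ (T (y ⊗ₜ[K] μ (T (x ⊗ₜ[K] z)))) :=
  stmt14_general K g μ hleib T τ hcomm h1 h2
end

section
/- Let (g, [·,·]) be a Leibniz algebra over a field K of characteristic zero, with bracket regarded as the linear map μ : g ⊗ g → g, and let R : g → g be a Rota-Baxter operator, i.e. [Rx, Ry] = R([Rx, y] + [x, Ry]) for all x, y ∈ g. Define T : g ⊗ g → g ⊗ g by T(x ⊗ y) = R(x) ⊗ y + x ⊗ R(y) and τ : g ⊗ g ⊗ g → g ⊗ g ⊗ g by τ(x ⊗ y ⊗ z) = R(x) ⊗ R(y) ⊗ z + R(x) ⊗ y ⊗ R(z) + x ⊗ R(y) ⊗ R(z). Then T is a weak pseudotwistor on g with weak companion τ: namely (η₁₂ ⊗ Id)∘τ = τ∘(η₁₂ ⊗ Id), T∘(Id ⊗ μ)∘(Id ⊗ T) = (Id ⊗ μ)∘τ, and T∘(μ ⊗ Id)∘(T ⊗ Id) = (μ ⊗ Id)∘τ.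 -/
/-!
Each identity is checked on pure tensors `x ⊗ y ⊗ z`. The companion is symmetric in its first
two slots by inspection. In the other two identities, after expanding, the only terms that do not
cancel outright are `x ⊗ R([Ry, z] + [y, Rz])` (resp. `R([Rx, y] + [x, Ry]) ⊗ z`) on the left
against `x ⊗ [Ry, Rz]` (resp. `[Rx, Ry] ⊗ z`) on the right, and these agree by the
Rota-Baxter identity.
-/

open TensorProduct LinearMap

namespace TensorProduct

theorem assoc_comp_rTensor_comm_comp_assoc_symm_s15 {K M N P : Type*} [CommSemiring K]
    [AddCommMonoid M] [Module K M] [AddCommMonoid N] [Module K N] [AddCommMonoid P] [Module K P] :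
    (TensorProduct.assoc K N M P).toLinearMap ∘ₗ rTensor P (TensorProduct.comm K M N).toLinearMap
      ∘ₗ (TensorProduct.assoc K M N P).symm.toLinearMap = (leftComm K M N P).toLinearMap :=
  ext_threefold' fun _ _ _ => rfl

end TensorProduct

namespace RotaBaxter

variable {K M : Type*} [CommSemiring K] [AddCommMonoid M] [Module K M]

def twist (R : M →ₗ[K] M) : M ⊗[K] M →ₗ[K] M ⊗[K] M :=
  rTensor M R + lTensor M R

def companion (R : M →ₗ[K] M) : M ⊗[K] (M ⊗[K] M) →ₗ[K] M ⊗[K] (M ⊗[K] M) :=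
  map R (twist R) + lTensor M (map R R)

variable (R : M →ₗ[K] M)

@[simp]
theorem twist_tmul (x y : M) : twist R (x ⊗ₜ y) = R x ⊗ₜ y + x ⊗ₜ R y := rfl

@[simp]
theorem companion_tmul (x y z : M) :
    companion R (x ⊗ₜ (y ⊗ₜ z)) = R x ⊗ₜ (R y ⊗ₜ z) + R x ⊗ₜ (y ⊗ₜ R z) + x ⊗ₜ (R y ⊗ₜ R z) := by
  simp [companion, tmul_add]

theorem eq_twist {T : M ⊗[K] M →ₗ[K] M ⊗[K] M} (hT : ∀ x y, T (x ⊗ₜ y) = R x ⊗ₜ y + x ⊗ₜ R y) :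
    T = twist R :=
  TensorProduct.ext' hT

theorem eq_companion {τ : M ⊗[K] (M ⊗[K] M) →ₗ[K] M ⊗[K] (M ⊗[K] M)}
    (hτ : ∀ x y z, τ (x ⊗ₜ (y ⊗ₜ z)) =
      R x ⊗ₜ (R y ⊗ₜ z) + R x ⊗ₜ (y ⊗ₜ R z) + x ⊗ₜ (R y ⊗ₜ R z)) :
    τ = companion R :=
  ext_threefold' fun x y z => by rw [hτ, companion_tmul]

theorem leftComm_comp_companion :
    (leftComm K M M M).toLinearMap ∘ₗ companion R = companion R ∘ₗ (leftComm K M M M).toLinearMap :=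
  ext_threefold' fun x y z => by
    simp only [comp_apply, LinearEquiv.coe_coe, companion_tmul, map_add, leftComm_tmul]
    abel

variable {R} {μ : M ⊗[K] M →ₗ[K] M}

theorem twist_comp_lTensor_comp_lTensor_twist
    (hRB : ∀ x y, μ (R x ⊗ₜ R y) = R (μ (R x ⊗ₜ y) + μ (x ⊗ₜ R y))) :
    twist R ∘ₗ lTensor M μ ∘ₗ lTensor M (twist R) = lTensor M μ ∘ₗ companion R :=
  ext_threefold' fun x y z => by
    simp only [comp_apply, lTensor_tmul, twist_tmul, companion_tmul, map_add, tmul_add, hRB]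
    abel

theorem twist_comp_rTensor_comp_rTensor_twist
    (hRB : ∀ x y, μ (R x ⊗ₜ R y) = R (μ (R x ⊗ₜ y) + μ (x ⊗ₜ R y))) :
    twist R ∘ₗ (rTensor M μ ∘ₗ (TensorProduct.assoc K M M M).symm.toLinearMap)
        ∘ₗ ((TensorProduct.assoc K M M M).toLinearMap ∘ₗ rTensor M (twist R)
          ∘ₗ (TensorProduct.assoc K M M M).symm.toLinearMap)
      = (rTensor M μ ∘ₗ (TensorProduct.assoc K M M M).symm.toLinearMap) ∘ₗ companion R :=
  ext_threefold' fun x y z => by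
    simp only [comp_apply, LinearEquiv.coe_coe, assoc_symm_tmul, rTensor_tmul, twist_tmul,
      companion_tmul, assoc_tmul, map_add, add_tmul, hRB]
    abel

end RotaBaxter

open RotaBaxter in
theorem stmt15_general (K : Type*) [Field K]
    (g : Type*) [AddCommGroup g] [Module K g]
    (μ : g ⊗[K] g →ₗ[K] g)
    (R : g →ₗ[K] g)
    (hRB : ∀ x y : g,
      μ (R x ⊗ₜ[K] R y) = R (μ (R x ⊗ₜ[K] y) + μ (x ⊗ₜ[K] R y)))
    (T : g ⊗[K] g →ₗ[K] g ⊗[K] g)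
    (hT : ∀ x y : g, T (x ⊗ₜ[K] y) = R x ⊗ₜ[K] y + x ⊗ₜ[K] R y)
    (τ : g ⊗[K] (g ⊗[K] g) →ₗ[K] g ⊗[K] (g ⊗[K] g))
    (hτ : ∀ x y z : g,
      τ (x ⊗ₜ[K] (y ⊗ₜ[K] z)) =
        R x ⊗ₜ[K] (R y ⊗ₜ[K] z) + R x ⊗ₜ[K] (y ⊗ₜ[K] R z) + x ⊗ₜ[K] (R y ⊗ₜ[K] R z)) :
    -- `(η₁₂ ⊗ Id) ∘ τ = τ ∘ (η₁₂ ⊗ Id)`, with `η₁₂ ⊗ Id` expressed on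
    -- `g ⊗ (g ⊗ g)` via the associator
    (((TensorProduct.assoc K g g g).toLinearMap
        ∘ₗ LinearMap.rTensor g (TensorProduct.comm K g g).toLinearMap
        ∘ₗ (TensorProduct.assoc K g g g).symm.toLinearMap) ∘ₗ τ
      = τ ∘ₗ ((TensorProduct.assoc K g g g).toLinearMap
        ∘ₗ LinearMap.rTensor g (TensorProduct.comm K g g).toLinearMap
        ∘ₗ (TensorProduct.assoc K g g g).symm.toLinearMap)) ∧
    -- `T ∘ (Id ⊗ μ) ∘ (Id ⊗ T) = (Id ⊗ μ) ∘ τ`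
    (T ∘ₗ LinearMap.lTensor g μ ∘ₗ LinearMap.lTensor g T = LinearMap.lTensor g μ ∘ₗ τ) ∧
    -- `T ∘ (μ ⊗ Id) ∘ (T ⊗ Id) = (μ ⊗ Id) ∘ τ`
    (T ∘ₗ (LinearMap.rTensor g μ ∘ₗ (TensorProduct.assoc K g g g).symm.toLinearMap)
        ∘ₗ ((TensorProduct.assoc K g g g).toLinearMap
          ∘ₗ LinearMap.rTensor g T ∘ₗ (TensorProduct.assoc K g g g).symm.toLinearMap)
      = (LinearMap.rTensor g μ ∘ₗ (TensorProduct.assoc K g g g).symm.toLinearMap) ∘ₗ τ) := by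
  obtain rfl := eq_twist R hT
  obtain rfl := eq_companion R hτ
  rw [assoc_comp_rTensor_comm_comp_assoc_symm_s15]
  exact ⟨leftComm_comp_companion R, twist_comp_lTensor_comp_lTensor_twist hRB,
    twist_comp_rTensor_comp_rTensor_twist hRB⟩

/-- For a Rota-Baxter operator `R` on a Leibniz algebra `(g, μ)`, the map
`T(x ⊗ y) = R(x) ⊗ y + x ⊗ R(y)` is a weak pseudotwistor with weak companion
`τ(x ⊗ y ⊗ z) = R(x) ⊗ R(y) ⊗ z + R(x) ⊗ y ⊗ R(z) + x ⊗ R(y) ⊗ R(z)`. -/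
theorem stmt15 (K : Type*) [Field K] [CharZero K]
    (g : Type*) [AddCommGroup g] [Module K g]
    (μ : g ⊗[K] g →ₗ[K] g)
    (hleib : ∀ x y z : g,
      μ (x ⊗ₜ[K] μ (y ⊗ₜ[K] z)) = μ (μ (x ⊗ₜ[K] y) ⊗ₜ[K] z) + μ (y ⊗ₜ[K] μ (x ⊗ₜ[K] z)))
    (R : g →ₗ[K] g)
    (hRB : ∀ x y : g,
      μ (R x ⊗ₜ[K] R y) = R (μ (R x ⊗ₜ[K] y) + μ (x ⊗ₜ[K] R y)))
    (T : g ⊗[K] g →ₗ[K] g ⊗[K] g)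
    (hT : ∀ x y : g, T (x ⊗ₜ[K] y) = R x ⊗ₜ[K] y + x ⊗ₜ[K] R y)
    (τ : g ⊗[K] (g ⊗[K] g) →ₗ[K] g ⊗[K] (g ⊗[K] g))
    (hτ : ∀ x y z : g,
      τ (x ⊗ₜ[K] (y ⊗ₜ[K] z)) =
        R x ⊗ₜ[K] (R y ⊗ₜ[K] z) + R x ⊗ₜ[K] (y ⊗ₜ[K] R z) + x ⊗ₜ[K] (R y ⊗ₜ[K] R z)) :
    -- `(η₁₂ ⊗ Id) ∘ τ = τ ∘ (η₁₂ ⊗ Id)`, with `η₁₂ ⊗ Id` expressed on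
    -- `g ⊗ (g ⊗ g)` via the associator
    (((TensorProduct.assoc K g g g).toLinearMap
        ∘ₗ LinearMap.rTensor g (TensorProduct.comm K g g).toLinearMap
        ∘ₗ (TensorProduct.assoc K g g g).symm.toLinearMap) ∘ₗ τ
      = τ ∘ₗ ((TensorProduct.assoc K g g g).toLinearMap
        ∘ₗ LinearMap.rTensor g (TensorProduct.comm K g g).toLinearMap
        ∘ₗ (TensorProduct.assoc K g g g).symm.toLinearMap)) ∧
    -- `T ∘ (Id ⊗ μ) ∘ (Id ⊗ T) = (Id ⊗ μ) ∘ τ`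
    (T ∘ₗ LinearMap.lTensor g μ ∘ₗ LinearMap.lTensor g T = LinearMap.lTensor g μ ∘ₗ τ) ∧
    -- `T ∘ (μ ⊗ Id) ∘ (T ⊗ Id) = (μ ⊗ Id) ∘ τ`
    (T ∘ₗ (LinearMap.rTensor g μ ∘ₗ (TensorProduct.assoc K g g g).symm.toLinearMap)
        ∘ₗ ((TensorProduct.assoc K g g g).toLinearMap
          ∘ₗ LinearMap.rTensor g T ∘ₗ (TensorProduct.assoc K g g g).symm.toLinearMap)
      = (LinearMap.rTensor g μ ∘ₗ (TensorProduct.assoc K g g g).symm.toLinearMap) ∘ₗ τ) :=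
  stmt15_general K g μ R hRB T hT τ hτ
end

section
/- Let (g, [·,·]) be a Leibniz algebra over a field K of characteristic zero and let R : g → g be a Rota-Baxter operator, i.e. [Rx, Ry] = R([Rx, y] + [x, Ry]) for all x, y ∈ g. Then the bilinear operation [x, y]_R := [Rx, y] + [x, Ry] is a Leibniz algebra structure on g; that is, [x, [y, z]_R]_R = [[x, y]_R, z]_R + [y, [x, z]_R]_R for all x, y, z ∈ g. -/
/-! Expanding, the Rota-Baxter identity turns `[x, [y, z]_R]_R` into
`[Rx, [Ry, z]] + [Rx, [y, Rz]] + [x, [Ry, Rz]]`. Applying the Leibniz identity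
to each of the three terms and folding the Rota-Baxter identity back in gives the right-hand side. -/

section

variable {K M : Type*} [CommSemiring K] [AddCommMonoid M] [Module K M]

def descendentBracket (b : M →ₗ[K] M →ₗ[K] M) (R : M →ₗ[K] M) (x y : M) : M :=
  b (R x) y + b x (R y)

theorem descendentBracket_leibniz (b : M →ₗ[K] M →ₗ[K] M)
    (hleib : ∀ x y z : M, b x (b y z) = b (b x y) z + b y (b x z))
    (R : M →ₗ[K] M) (hRB : ∀ x y : M, b (R x) (R y) = R (b (R x) y + b x (R y)))
    (x y z : M) :
    descendentBracket b R x (descendentBracket b R y z) =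
      descendentBracket b R (descendentBracket b R x y) z +
        descendentBracket b R y (descendentBracket b R x z) := by
  simp only [descendentBracket, ← hRB, map_add, LinearMap.add_apply,
    hleib (R x) (R y) z, hleib (R x) y (R z), hleib x (R y) (R z)]
  abel

end

theorem stmt16_general (K : Type*) [Field K]
    (g : Type*) [AddCommGroup g] [Module K g]
    (b : g →ₗ[K] g →ₗ[K] g)
    (hleib : ∀ x y z : g, b x (b y z) = b (b x y) z + b y (b x z))
    (R : g →ₗ[K] g)
    (hRB : ∀ x y : g, b (R x) (R y) = R (b (R x) y + b x (R y)))
    (brR : g → g → g)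
    (hbrR : ∀ x y : g, brR x y = b (R x) y + b x (R y)) :
    ∀ x y z : g, brR x (brR y z) = brR (brR x y) z + brR y (brR x z) := by
  obtain rfl : brR = descendentBracket b R := funext₂ hbrR
  exact descendentBracket_leibniz b hleib R hRB

/-- A Rota-Baxter operator `R` on a Leibniz algebra `(g, [·,·])` induces a new Leibniz
bracket `[x, y]_R = [Rx, y] + [x, Ry]` on `g`. -/
theorem stmt16 (K : Type*) [Field K] [CharZero K]
    (g : Type*) [AddCommGroup g] [Module K g]
    (b : g →ₗ[K] g →ₗ[K] g)
    (hleib : ∀ x y z : g, b x (b y z) = b (b x y) z + b y (b x z))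
    (R : g →ₗ[K] g)
    (hRB : ∀ x y : g, b (R x) (R y) = R (b (R x) y + b x (R y)))
    (brR : g → g → g)
    (hbrR : ∀ x y : g, brR x y = b (R x) y + b x (R y)) :
    ∀ x y z : g, brR x (brR y z) = brR (brR x y) z + brR y (brR x z) :=
  stmt16_general K g b hleib R hRB brR hbrR
end
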